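/- arXiv:2501.09110 — 2 statements merged into one kernel-verified Lean document; each statement's English description precedes it below -/
import Mathlib

section
/- In the integral group ring Z[A_5], the element u = 49 + 26·C₁ − 10·C₂ − 16·C₄ is a central unit, where C₁ is the sum of all elements conjugate to (1 2 3 4 5), C₂ is the sum of all elements conjugate to (1 3 5 2 4), and C₄ is the sum of all products of two disjoint transpositions. -/
/-!
The conjugacy classes of `A₅` are `{1}`, the two classes of twelve 5-cycles of `sigma` and
`sigma²`, the twenty 3-cycles and the fifteen double transpositions; they are told apart by the
size of the support and, on 5-cycles, by the parity of `orbitInversionCount`. The inverse of `u`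
is `v = 49 − 10·C₁ + 26·C₂ − 16·C₄`, the image of `u` under the outer automorphism of `A₅`
exchanging the two classes of 5-cycles. As combinations of class sums, `u` and `v` are central,
hence so is `u v`, and `u v = 1` reduces to its coefficients at five class representatives.
-/

open scoped Classical

/-- The alternating group on 5 letters. -/
abbrev A5 : Type := ↥(alternatingGroup (Fin 5))

/-- A fixed 5-cycle `(0 1 2 3 4)` in `A₅`. -/
noncomputable def sigma : A5 :=
  ⟨finRotate 5, by
    rw [Equiv.Perm.mem_alternatingGroup]
    show Equiv.Perm.sign (finRotate (4 + 1)) = 1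
    rw [sign_finRotate]; decide⟩

/-- A fixed product of two disjoint transpositions `(0 1)(2 3)` in `A₅`. -/
noncomputable def tau : A5 :=
  ⟨Equiv.swap 0 1 * Equiv.swap 2 3, by
    rw [Equiv.Perm.mem_alternatingGroup, map_mul,
      Equiv.Perm.sign_swap (by decide), Equiv.Perm.sign_swap (by decide)]
    decide⟩

/-- The sum, in `ℤ[A₅]`, of all elements of `A₅` conjugate to `x`. -/
noncomputable def classSum (x : A5) : MonoidAlgebra ℤ A5 :=
  ∑ g : A5, if IsConj x g then MonoidAlgebra.of ℤ A5 g else 0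

namespace MonoidAlgebra

variable {k G : Type*}

section Semiring

variable [Semiring k]

theorem coeff_one_apply [One G] [DecidableEq G] (g : G) :
    (1 : k[G]).coeff g = if g = 1 then 1 else 0 := by
  simp [one_def, Finsupp.single_apply, eq_comm]

theorem coeff_mul_eq_sum [Group G] [Fintype G] (x y : k[G]) (g : G) :
    (x * y).coeff g = ∑ h, x.coeff h * y.coeff (h⁻¹ * g) := by
  rw [coeff_mul_apply_left, Finsupp.sum_fintype]
  simp

end Semiring

variable [CommRing k] [Group G]

theorem mem_center_iff_coeff_mul_comm {z : k[G]} :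
    z ∈ Subring.center k[G] ↔ ∀ g h : G, z.coeff (g * h) = z.coeff (h * g) := by
  rw [Subring.mem_center_iff]
  constructor
  · intro hz g h
    have := congr(($(hz (single g 1))).coeff (g * (h * g)))
    rwa [coeff_single_mul_mul, ← mul_assoc, coeff_mul_single_mul, one_mul, mul_one, eq_comm] at this
  · intro hz y
    ext g
    rw [coeff_mul_apply_left, coeff_mul_apply_right]
    refine Finsupp.sum_congr fun h _ ↦ ?_
    rw [mul_comm, hz]

theorem coeff_eq_of_isConj {z : k[G]} (hz : z ∈ Subring.center k[G]) {a b : G}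
    (hab : IsConj a b) : z.coeff a = z.coeff b := by
  obtain ⟨c, rfl⟩ := isConj_iff.1 hab
  rw [mem_center_iff_coeff_mul_comm.1 hz, inv_mul_cancel_left]

end MonoidAlgebra

namespace A5

open Equiv MonoidAlgebra

/-- For a 5-cycle `p`, the map `i ↦ pⁱ 0` conjugates `sigma` to `p` in `S₅`; since the
centralizer `⟨sigma⟩` of `sigma` is even, `p` is conjugate to `sigma` in `A₅` exactly when
this enumeration `(0, p 0, p² 0, p³ 0, p⁴ 0)` has an even number of inversions. -/
def orbitInversionCount (p : Perm (Fin 5)) : ℕ :=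
  let a₁ := p 0
  let a₂ := p a₁
  let a₃ := p a₂
  let a₄ := p a₃
  (if a₂ < a₁ then 1 else 0) + (if a₃ < a₁ then 1 else 0) + (if a₄ < a₁ then 1 else 0) +
    (if a₃ < a₂ then 1 else 0) + (if a₄ < a₂ then 1 else 0) + (if a₄ < a₃ then 1 else 0)

def conjClassIndex (a : A5) : Fin 5 :=
  match (a : Perm (Fin 5)).support.card with
  | 0 => 0
  | 3 => 3
  | 4 => 4
  | _ => if Even (orbitInversionCount a) then 1 else 2

noncomputable def classRep : Fin 5 → A5 := ![1, sigma, sigma ^ 2, sigma * tau, tau]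

theorem conjClassIndex_classRep : ∀ i, conjClassIndex (classRep i) = i := by
  decide +kernel

theorem isConj_classRep_conjClassIndex : ∀ a, IsConj (classRep (conjClassIndex a)) a := by
  simp only [isConj_iff]
  decide +kernel

theorem conjClassIndex_conj_classRep : ∀ i c, conjClassIndex (c * classRep i * c⁻¹) = i := by
  decide +kernel

theorem isConj_iff_conjClassIndex_eq {a b : A5} :
    IsConj a b ↔ conjClassIndex a = conjClassIndex b := by
  constructor
  · intro hab
    obtain ⟨c, hc⟩ := isConj_iff.1 ((isConj_classRep_conjClassIndex a).trans hab)
    rw [← hc, conjClassIndex_conj_classRep]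
  · intro hab
    exact (isConj_classRep_conjClassIndex a).symm.trans
      (hab ▸ isConj_classRep_conjClassIndex b)

theorem conjClassIndex_eq_zero_iff {a : A5} : conjClassIndex a = 0 ↔ a = 1 := by
  rw [← conjClassIndex_classRep 0, ← isConj_iff_conjClassIndex_eq]
  exact isConj_one_left

theorem coeff_classSum (x a : A5) : (classSum x).coeff a = if IsConj x a then 1 else 0 := by
  rw [classSum, coeff_sum, Finset.sum_apply', Finset.sum_eq_single a]
  · split_ifs <;> simp
  · intro g _ hga
    split_ifs <;> simp [hga]
  · simp

theorem classSum_one : classSum 1 = 1 := by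
  ext a
  simp only [coeff_classSum, isConj_one_right]
  rw [coeff_one_apply]

theorem classSum_mem_center (x : A5) : classSum x ∈ Subring.center ℤ[A5] := by
  refine mem_center_iff_coeff_mul_comm.2 fun g h ↦ ?_
  have hgh : conjClassIndex (g * h) = conjClassIndex (h * g) :=
    isConj_iff_conjClassIndex_eq.1 (isConj_iff.2 ⟨h, by group⟩)
  simp only [coeff_classSum, isConj_iff_conjClassIndex_eq, hgh]

noncomputable def ofClassWeights (w : Fin 5 → ℤ) : ℤ[A5] :=
  ∑ i, w i • classSum (classRep i)

theorem coeff_ofClassWeights (w : Fin 5 → ℤ) (a : A5) :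
    (ofClassWeights w).coeff a = w (conjClassIndex a) := by
  simp only [ofClassWeights, coeff_sum, Finset.sum_apply', coeff_smul_apply, smul_eq_mul,
    coeff_classSum, isConj_iff_conjClassIndex_eq, conjClassIndex_classRep, mul_ite, mul_one,
    mul_zero, Finset.sum_ite_eq', Finset.mem_univ, if_true]

theorem ofClassWeights_mem_center (w : Fin 5 → ℤ) : ofClassWeights w ∈ Subring.center ℤ[A5] :=
  Subring.sum_mem _ fun _ _ ↦ Subring.zsmul_mem _ (classSum_mem_center _) _

theorem ofClassWeights_mul_eq_one {w w' : Fin 5 → ℤ}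
    (h : ∀ i, ∑ b, w (conjClassIndex b) * w' (conjClassIndex (b⁻¹ * classRep i)) =
      if i = 0 then 1 else 0) :
    ofClassWeights w * ofClassWeights w' = 1 := by
  have hz := mul_mem (ofClassWeights_mem_center w) (ofClassWeights_mem_center w')
  ext a
  rw [← coeff_eq_of_isConj hz (isConj_classRep_conjClassIndex a), coeff_mul_eq_sum]
  simp only [coeff_ofClassWeights, h, conjClassIndex_eq_zero_iff]
  rw [coeff_one_apply]

end A5

open A5

/-- In `ℤ[A₅]`, the element `u = 49 + 26·C₁ − 10·C₂ − 16·C₄` is a central unit, where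
`C₁` is the class sum of `(0 1 2 3 4)`, `C₂` that of its square (a 5-cycle of the other
class), and `C₄` that of the products of two disjoint transpositions. -/
theorem central_unit_int_A5 :
    IsUnit ((49 : MonoidAlgebra ℤ A5) + 26 * classSum sigma - 10 * classSum (sigma ^ 2)
        - 16 * classSum tau) ∧
      ((49 : MonoidAlgebra ℤ A5) + 26 * classSum sigma - 10 * classSum (sigma ^ 2)
        - 16 * classSum tau) ∈ Subring.center (MonoidAlgebra ℤ A5) := by
  have hu : (49 : MonoidAlgebra ℤ A5) + 26 * classSum sigma - 10 * classSum (sigma ^ 2)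
      - 16 * classSum tau = ofClassWeights ![49, 26, -10, 0, -16] := by
    simp [ofClassWeights, Fin.sum_univ_five, classRep, classSum_one, sub_eq_add_neg]
  have huv : ofClassWeights ![49, 26, -10, 0, -16] * ofClassWeights ![49, -10, 26, 0, -16] = 1 :=
    ofClassWeights_mul_eq_one (by decide +kernel)
  rw [hu]
  refine ⟨⟨⟨_, _, huv, ?_⟩, rfl⟩, ofClassWeights_mem_center _⟩
  rw [← Subring.mem_center_iff.1 (ofClassWeights_mem_center _), huv]
end

section
/- Let G be a torsion-free group and K a field. If u is a central unit of the group algebra K[G] whose support is contained in the center of G and G satisfies the unique product property, then u is trivial, i.e. u = α·g for some α ∈ K^× and g ∈ Z(G). -/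
/-- A monoid is torsion-free if no nontrivial element has finite order
(the meaning of Mathlib's former `Monoid.IsTorsionFree`). -/
def Monoid.IsTorsionFree (G : Type*) [Monoid G] : Prop :=
  ∀ g : G, g ≠ 1 → ¬IsOfFinOrder g

/-!
A group with unique products even has two unique products (Strojnowski). If `u * v = 1` and one of
the supports of `u`, `v` has two elements, this gives two distinct pairs `(a, b)` whose products
`a * b` occur in `u * v` with the nonzero coefficient `u a * v b`, so both products are `1`; but
then the uniqueness of either pair forces the two pairs to coincide. Hence a unit has exactly one
term.
-/

open Finset

namespace MonoidAlgebra

variable {R G : Type*} [Semiring R]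

theorem eq_one_of_coeff_one_ne_zero [One G] {g : G} (h : (1 : R[G]).coeff g ≠ 0) : g = 1 := by
  by_contra hg
  exact h (by simp [one_def, coeff_single, Ne.symm hg])

theorem card_support_mul_card_support_le_one_of_mul_eq_one [NoZeroDivisors R] [Monoid G]
    [TwoUniqueProds G] {u v : R[G]} (huv : u * v = 1) :
    #u.coeff.support * #v.coeff.support ≤ 1 := by
  by_contra! hlt
  obtain ⟨p, hp, q, hq, hpq, hp_uniq, hq_uniq⟩ := TwoUniqueProds.uniqueMul_of_one_lt_card hlt
  rw [mem_product, Finsupp.mem_support_iff, Finsupp.mem_support_iff] at hp hq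
  have hp_one : p.1 * p.2 = 1 := eq_one_of_coeff_one_ne_zero <| by
    rw [← huv, coeff_mul_mul_of_uniqueMul hp_uniq]
    exact mul_ne_zero hp.1 hp.2
  have hq_one : q.1 * q.2 = 1 := eq_one_of_coeff_one_ne_zero <| by
    rw [← huv, coeff_mul_mul_of_uniqueMul hq_uniq]
    exact mul_ne_zero hq.1 hq.2
  obtain ⟨h₁, h₂⟩ := hp_uniq (Finsupp.mem_support_iff.mpr hq.1) (Finsupp.mem_support_iff.mpr hq.2)
    (hq_one.trans hp_one.symm)
  exact hpq (Prod.ext h₁.symm h₂.symm)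

theorem card_support_eq_one_of_isUnit [NoZeroDivisors R] [Nontrivial R] [Monoid G]
    [TwoUniqueProds G] {u : R[G]} (hu : IsUnit u) : #u.coeff.support = 1 := by
  obtain ⟨U, rfl⟩ := hu
  have hcard := card_support_mul_card_support_le_one_of_mul_eq_one U.mul_inv
  have hu_pos : 0 < #(U : R[G]).coeff.support := by
    simp [card_pos, Finsupp.support_nonempty_iff]
  have hv_pos : 0 < #(↑U⁻¹ : R[G]).coeff.support := by
    simp [card_pos, Finsupp.support_nonempty_iff]
  exact Nat.eq_one_of_mul_eq_one_right (le_antisymm hcard (Nat.mul_pos hu_pos hv_pos))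

end MonoidAlgebra

theorem central_unit_trivial_of_uniqueProds_general
    (K : Type*) [Field K] (G : Type*) [Group G] [UniqueProds G]
    (u : MonoidAlgebra K G) (hu : IsUnit u)
    (hsupp : ∀ g ∈ u.coeff.support, g ∈ Subgroup.center G) :
    ∃ (α : Kˣ) (g : G), g ∈ Subgroup.center G ∧ u = MonoidAlgebra.single g (α : K) := by
  have : TwoUniqueProds G := UniqueProds.toTwoUniqueProds_of_group
  obtain ⟨g, hg⟩ := card_eq_one.mp (MonoidAlgebra.card_support_eq_one_of_isUnit hu)
  obtain ⟨hg_ne, hu_single⟩ := Finsupp.support_eq_singleton.mp hg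
  exact ⟨Units.mk0 _ hg_ne, g, hsupp g (hg ▸ mem_singleton_self g),
    MonoidAlgebra.coeff_injective hu_single⟩

/-- Let `G` be a torsion-free group with the unique product property and `K` a field.
A central unit of `K[G]` whose support is contained in the center of `G` is trivial,
i.e. of the form `α·g` with `α ∈ Kˣ` and `g ∈ Z(G)`. -/
theorem central_unit_trivial_of_uniqueProds
    (K : Type*) [Field K] (G : Type*) [Group G] [UniqueProds G]
    (htf : Monoid.IsTorsionFree G)
    (u : MonoidAlgebra K G) (hu : IsUnit u)
    (hc : u ∈ Subring.center (MonoidAlgebra K G))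
    (hsupp : ∀ g ∈ u.coeff.support, g ∈ Subgroup.center G) :
    ∃ (α : Kˣ) (g : G), g ∈ Subgroup.center G ∧ u = MonoidAlgebra.single g (α : K) :=
  central_unit_trivial_of_uniqueProds_general K G u hu hsupp
end
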